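/- Along the normalized flocking flow dx_i/dt = (α/(k_i ρ_i))·Σ_q A_iq (x_q - (x_i·x_q)x_i) with unit vectors x_i, the time derivative of the energy E = (1/4)Σ_i Σ_j A_ij ‖x_j - x_i‖² equals dE/dt = α Σ_i (1/(k_i ρ_i)) [ (x_i · y_i)² - ‖y_i‖² ], where y_i = Σ_q A_iq x_q is the sum of neighbor velocities. -/

import Mathlib

open scoped RealInnerProductSpace BigOperators

/-!
Write `vᵢ` for the velocity of `xᵢ` and `yᵢ = Σ_q A_iq x_q`. Differentiating the energy term by
term gives `(1/2) Σᵢⱼ Aᵢⱼ ⟪xⱼ - xᵢ, vⱼ - vᵢ⟫`; since each `vᵢ` is tangent to the sphere at `xᵢ`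
and `A` is symmetric, this collapses to `-Σᵢ ⟪yᵢ, vᵢ⟫`. The flow moves `xᵢ` along
`yᵢ - ⟪xᵢ, yᵢ⟫ xᵢ`, which is tangent at `xᵢ` because `‖xᵢ‖ = 1`, and
`⟪yᵢ, yᵢ - ⟪xᵢ, yᵢ⟫ xᵢ⟫ = ‖yᵢ‖² - ⟪xᵢ, yᵢ⟫²`.
-/

namespace Flocking

variable {ι E : Type*} [Fintype ι] [NormedAddCommGroup E] [InnerProductSpace ℝ E]

def tangentProj (u w : E) : E := w - ⟪u, w⟫ • u

theorem sum_smul_tangentProj (u : E) (c : ι → ℝ) (w : ι → E) :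
    ∑ q, c q • tangentProj u (w q) = tangentProj u (∑ q, c q • w q) := by
  simp only [tangentProj, smul_sub, smul_smul, Finset.sum_sub_distrib, ← Finset.sum_smul,
    inner_sum, real_inner_smul_right]

theorem inner_tangentProj_self {u : E} (hu : ‖u‖ = 1) (w : E) : ⟪u, tangentProj u w⟫ = 0 := by
  rw [tangentProj, inner_sub_right, real_inner_smul_right, real_inner_self_eq_norm_sq, hu]
  ring

theorem inner_tangentProj (u w : E) :
    ⟪w, tangentProj u w⟫ = ‖w‖ ^ 2 - ⟪u, w⟫ ^ 2 := by
  rw [tangentProj, inner_sub_right, real_inner_smul_right, real_inner_self_eq_norm_sq,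
    real_inner_comm w u]
  ring

theorem hasDerivAt_sum_sum_mul_norm_sub_sq (A : ι → ι → ℝ) {x : ℝ → ι → E} {v : ι → E}
    {t₀ : ℝ} (hx : ∀ i, HasDerivAt (fun t => x t i) (v i) t₀) :
    HasDerivAt (fun t => ∑ i, ∑ j, A i j * ‖x t j - x t i‖ ^ 2)
      (∑ i, ∑ j, A i j * (2 * ⟪x t₀ j - x t₀ i, v j - v i⟫)) t₀ :=
  HasDerivAt.fun_sum fun i _ => HasDerivAt.fun_sum fun j _ =>
    (((hx j).sub (hx i)).norm_sq).const_mul (A i j)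

theorem sum_sum_mul_inner_sub_sub {A : ι → ι → ℝ} (hA : ∀ i j, A i j = A j i) {x v : ι → E}
    (hxv : ∀ i, ⟪x i, v i⟫ = 0) :
    ∑ i, ∑ j, A i j * ⟪x j - x i, v j - v i⟫ = -2 * ∑ i, ⟪∑ j, A i j • x j, v i⟫ := by
  have expand : ∀ i j, A i j * ⟪x j - x i, v j - v i⟫ =
      -(A i j * ⟪x j, v i⟫) - A i j * ⟪x i, v j⟫ := by
    intro i j
    rw [inner_sub_left, inner_sub_right, inner_sub_right, hxv i, hxv j]
    ring
  have swap : ∑ i, ∑ j, A i j * ⟪x i, v j⟫ = ∑ i, ∑ j, A i j * ⟪x j, v i⟫ := by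
    rw [Finset.sum_comm]
    simp only [hA]
  simp only [expand, Finset.sum_sub_distrib, Finset.sum_neg_distrib, swap, sum_inner,
    real_inner_smul_left]
  ring

theorem hasDerivAt_energy {A : ι → ι → ℝ} (hA : ∀ i j, A i j = A j i) {x : ℝ → ι → E}
    {v : ι → E} {t₀ : ℝ} (hx : ∀ i, HasDerivAt (fun t => x t i) (v i) t₀)
    (hxv : ∀ i, ⟪x t₀ i, v i⟫ = 0) :
    HasDerivAt (fun t => (1 / 4) * ∑ i, ∑ j, A i j * ‖x t j - x t i‖ ^ 2)
      (-∑ i, ⟪∑ j, A i j • x t₀ j, v i⟫) t₀ := by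
  refine ((hasDerivAt_sum_sum_mul_norm_sub_sq A hx).const_mul (1 / 4)).congr_deriv ?_
  simp only [mul_left_comm (A _ _) 2, ← Finset.mul_sum, sum_sum_mul_inner_sub_sub hA hxv]
  ring

end Flocking

open Flocking in
theorem flocking_energy_derivative_general
    {D n : ℕ} (A : Fin n → Fin n → ℝ) (α : ℝ)
    (hAsymm : ∀ i j, A i j = A j i)
    (k ρ : Fin n → ℝ)
    (x : ℝ → Fin n → EuclideanSpace ℝ (Fin D)) (t₀ : ℝ)
    (hunit : ∀ t i, ‖x t i‖ = 1)
    (hflow : ∀ i, HasDerivAt (fun t => x t i)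
      ((α / (k i * ρ i)) •
        ∑ q, A i q • (x t₀ q - ⟪x t₀ i, x t₀ q⟫ • x t₀ i)) t₀) :
    HasDerivAt (fun t => (1 / 4) * ∑ i, ∑ j, A i j * ‖x t j - x t i‖ ^ 2)
      (α * ∑ i, (1 / (k i * ρ i)) *
        ((⟪x t₀ i, ∑ q, A i q • x t₀ q⟫) ^ 2 - ‖∑ q, A i q • x t₀ q‖ ^ 2)) t₀ := by
  have hflow' : ∀ i, HasDerivAt (fun t => x t i)
      ((α / (k i * ρ i)) • tangentProj (x t₀ i) (∑ q, A i q • x t₀ q)) t₀ := fun i => by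
    rw [← sum_smul_tangentProj]
    exact hflow i
  have htangent : ∀ i,
      ⟪x t₀ i, (α / (k i * ρ i)) • tangentProj (x t₀ i) (∑ q, A i q • x t₀ q)⟫ = 0 := fun i => by rw [real_inner_smul_right, inner_tangentProj_self (hunit t₀ i), mul_zero]
  refine (hasDerivAt_energy hAsymm hflow' htangent).congr_deriv ?_
  simp only [Finset.mul_sum, ← Finset.sum_neg_distrib]
  refine Finset.sum_congr rfl fun i _ => ?_
  rw [real_inner_smul_right, inner_tangentProj]
  ring

/-- Along the normalized flocking flow, the energy `E = (1/4)Σᵢ Σⱼ Aᵢⱼ ‖xⱼ - xᵢ‖²`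
has time derivative `α Σᵢ (1/(kᵢ ρᵢ)) [(xᵢ·yᵢ)² - ‖yᵢ‖²]` where `yᵢ = Σ_q Aᵢ_q x_q`. -/
theorem flocking_energy_derivative
    {D n : ℕ} (A : Fin n → Fin n → ℝ) (α : ℝ) (hα : 0 < α)
    (hA : ∀ i j, A i j = 0 ∨ A i j = 1)
    (hAsymm : ∀ i j, A i j = A j i)
    (hloop : ∀ i, A i i = 0)
    (k ρ : Fin n → ℝ) (hk : ∀ i, k i = ∑ j, A i j)
    (hkpos : ∀ i, 0 < k i) (hρpos : ∀ i, 0 < ρ i)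
    (x : ℝ → Fin n → EuclideanSpace ℝ (Fin D)) (t₀ : ℝ)
    (hunit : ∀ t i, ‖x t i‖ = 1)
    (hflow : ∀ i, HasDerivAt (fun t => x t i)
      ((α / (k i * ρ i)) •
        ∑ q, A i q • (x t₀ q - ⟪x t₀ i, x t₀ q⟫ • x t₀ i)) t₀) :
    HasDerivAt (fun t => (1 / 4) * ∑ i, ∑ j, A i j * ‖x t j - x t i‖ ^ 2)
      (α * ∑ i, (1 / (k i * ρ i)) *
        ((⟪x t₀ i, ∑ q, A i q • x t₀ q⟫) ^ 2 - ‖∑ q, A i q • x t₀ q‖ ^ 2)) t₀ :=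
  flocking_energy_derivative_general A α hAsymm k ρ x t₀ hunit hflow
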